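/- Let W ⊆ ℝ^n be a linear subspace with W ≠ {0} such that every circuit of W has at least two elements. Then (1/n)·χ̄_W ≤ κ_W ≤ √(χ̄_W² − 1), where χ̄_W = max{‖L_I^W‖ : ∅ ≠ I ⊆ {1,…,n}} and ‖L_I^W‖ is the ℓ₂→ℓ₂ operator norm of the lifting map on π_I(W). -/

import Mathlib

open scoped BigOperators

variable {ι : Type*} [Fintype ι] [DecidableEq ι]

/-- The ℓ₁ norm of a vector. -/
noncomputable def norm1 (x : ι → ℝ) : ℝ := ∑ i, |x i|

/-- The ℓ∞ norm of a vector. -/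
noncomputable def normInf (x : ι → ℝ) : ℝ := ⨆ i, |x i|

/-- The ℓ₂ norm of a vector. -/
noncomputable def norm2 (x : ι → ℝ) : ℝ := Real.sqrt (∑ i, (x i) ^ 2)

/-- The componentwise negative part `max (-x) 0`. -/
noncomputable def vneg (x : ι → ℝ) : ι → ℝ := fun i => max (-(x i)) 0

/-- The componentwise positive part `max x 0`. -/
noncomputable def vpos (x : ι → ℝ) : ι → ℝ := fun i => max (x i) 0

/-- `y` is sign-consistent with `x`. -/
def SignConsistent (y x : ι → ℝ) : Prop :=
  (∀ i, 0 ≤ x i * y i) ∧ ∀ i, x i = 0 → y i = 0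

/-- The subspace `ℝ^n_C` of vectors supported on `C`. -/
def coordSubspace (C : Set ι) : Submodule ℝ (ι → ℝ) where
  carrier := {x | ∀ i ∉ C, x i = 0}
  zero_mem' := by intro i _; rfl
  add_mem' := by intro a b ha hb i hi; simp [ha i hi, hb i hi]
  smul_mem' := by intro c a ha i hi; simp [ha i hi]

/-- `C` is a circuit of the subspace `W`: `W ∩ ℝ^n_C` is one-dimensional and no
strict subset of `C` has this property. -/
def IsCircuit (W : Submodule ℝ (ι → ℝ)) (C : Set ι) : Prop :=
  Module.finrank ℝ ↥(W ⊓ coordSubspace C) = 1 ∧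
  ∀ C' : Set ι, C' ⊂ C → Module.finrank ℝ ↥(W ⊓ coordSubspace C') ≠ 1

/-- The circuit imbalance measure `κ_W`. -/
noncomputable def kappa (W : Submodule ℝ (ι → ℝ)) : ℝ :=
  sSup ({1} ∪ {r | ∃ C : Set ι, IsCircuit W C ∧ ∃ g ∈ W, g ≠ 0 ∧ {i | g i ≠ 0} = C ∧
    r = sSup ((fun i => |g i|) '' C) / sInf ((fun i => |g i|) '' C)})

/-- The matroidal closure of `K` with respect to `W`. -/
def clos (W : Submodule ℝ (ι → ℝ)) (K : Set ι) : Set ι :=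
  K ∪ {j | j ∉ K ∧ ∃ C : Set ι, IsCircuit W C ∧ j ∈ C ∧ C ⊆ K ∪ {j}}

/-- `z` is the minimum-norm lift `L_I^W(p)` of `p` to `W`:
`z ∈ W`, `z` agrees with `p` on `I`, and `z` has minimum ℓ₂-norm among such vectors. -/
def IsMinLift (W : Submodule ℝ (ι → ℝ)) (I : Finset ι) (p z : ι → ℝ) : Prop :=
  z ∈ W ∧ (∀ i ∈ I, z i = p i) ∧
  ∀ z' ∈ W, (∀ i ∈ I, z' i = p i) → norm2 z ≤ norm2 z'

/-- The ℓ₂→ℓ₂ operator norm of the lifting map `L_I^W` on `π_I(W)`. -/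
noncomputable def liftOpNorm (W : Submodule ℝ (ι → ℝ)) (I : Finset ι) : ℝ :=
  sSup {r | ∃ p z, IsMinLift W I p z ∧ r = norm2 z / Real.sqrt (∑ i ∈ I, (p i) ^ 2)}

/-- The condition number `χ̄_W = max{‖L_I^W‖ : ∅ ≠ I}`. -/
noncomputable def chiBar (W : Submodule ℝ (ι → ℝ)) : ℝ :=
  sSup {r | ∃ I : Finset ι, I.Nonempty ∧ r = liftOpNorm W I}

/-- The orthogonal complement of `W` in `ℝ^n`. -/
def orthComp (W : Submodule ℝ (ι → ℝ)) : Submodule ℝ (ι → ℝ) where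
  carrier := {y | ∀ x ∈ W, ∑ i, x i * y i = 0}
  zero_mem' := by intro x hx; simp
  add_mem' := by
    intro a b ha hb x hx
    simpa [mul_add, Finset.sum_add_distrib, ha x hx] using hb x hx
  smul_mem' := by
    intro c a ha x hx
    have h := ha x hx
    have : ∑ i, x i * (c • a) i = c * ∑ i, x i * a i := by
      rw [Finset.mul_sum]
      refine Finset.sum_congr rfl fun i _ => ?_
      simp [Pi.smul_apply, smul_eq_mul]; ring
    simpa [this, h]

/-- `x` is a feasible solution to the primal program of Primal-Dual(W,d,c). -/
def PrimalFeasible (W : Submodule ℝ (ι → ℝ)) (d x : ι → ℝ) : Prop :=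
  x - d ∈ W ∧ ∀ i, 0 ≤ x i

/-- `s` is a feasible solution to the dual program of Primal-Dual(W,d,c). -/
def DualFeasible (W : Submodule ℝ (ι → ℝ)) (c s : ι → ℝ) : Prop :=
  s - c ∈ orthComp W ∧ ∀ i, 0 ≤ s i

/-- `(x,s)` is an optimal solution to Primal-Dual(W,d,c): both feasible and `⟨x,s⟩ = 0`. -/
def IsOptimalPair (W : Submodule ℝ (ι → ℝ)) (d c x s : ι → ℝ) : Prop :=
  PrimalFeasible W d x ∧ DualFeasible W c s ∧ ∑ i, x i * s i = 0

/-- The ℓ₂→ℓ₂ operator norm of a matrix. -/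
noncomputable def l2OpNorm {m n : Type*} [Fintype m] [Fintype n] [DecidableEq n]
    (A : Matrix m n ℝ) : ℝ :=
  ‖LinearMap.toContinuousLinearMap (Matrix.toEuclideanLin A)‖

/-- The max-norm (largest absolute value of an entry) of a matrix. -/
noncomputable def matMaxNorm {m n : Type*} [Fintype m] [Fintype n] (A : Matrix m n ℝ) : ℝ :=
  ⨆ i, ⨆ j, |A i j|

/-!
Peeling off the largest multiple of a sign-consistent circuit writes every vector of `W` as a
conformal sum of circuit vectors. If `z` is a minimum-norm lift of `p`, each circuit in such a sum
meets `I`, for otherwise removing it would shorten `z`; since a circuit vector `h` with `h i ≠ 0`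
satisfies `|h k| ≤ κ_W |h i|`, this gives `|z k| ≤ κ_W ‖p_I‖₁` and hence `‖z‖₂ ≤ n κ_W ‖p_I‖₂`.

Conversely, a circuit vector `g` is the only vector of `W` extending its values on
`I = {j} ∪ (supp g)ᶜ`, where `j` minimizes `|g j|` over the support. The lifting ratio of `g_I` is
then at least `√(g i ^ 2 + g j ^ 2) / |g j|` for any other index `i` in the support; taking `i` to
maximize `|g i|` (which needs a second support element when all entries have equal modulus)
gives `κ_W ^ 2 + 1 ≤ χ̄_W ^ 2`.
-/

open Function

lemma abs_sub_add_abs_eq_abs {a b : ℝ} (hab : 0 ≤ a * b) (hba : |b| ≤ |a|) :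
    |a - b| + |b| = |a| := by
  have hmul : |a| * |b| = a * b := by rw [← abs_mul, abs_of_nonneg hab]
  have hsq : |a - b| ^ 2 = (|a| - |b|) ^ 2 := by
    linear_combination (sq_abs (a - b)) - sq_abs a - sq_abs b + 2 * hmul
  rw [sq_eq_sq₀ (abs_nonneg _) (sub_nonneg.2 hba)] at hsq
  linarith

lemma Finset.sum_abs_le_sqrt_card_mul_sqrt_sum_sq {α : Type*} (s : Finset α) (p : α → ℝ) :
    ∑ i ∈ s, |p i| ≤ √s.card * √(∑ i ∈ s, p i ^ 2) := by
  rw [← Real.sqrt_mul (Nat.cast_nonneg _)]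
  exact Real.le_sqrt_of_sq_le <| by
    simpa [sq_abs] using sq_sum_le_card_mul_sum_sq (s := s) (f := (|p ·|))

section Circuits

omit [Fintype ι] [DecidableEq ι]

variable {W : Submodule ℝ (ι → ℝ)}

lemma SignConsistent.refl (x : ι → ℝ) : SignConsistent x x :=
  ⟨fun i => mul_self_nonneg (x i), fun _ h => h⟩

lemma SignConsistent.trans {x y z : ι → ℝ} (hzy : SignConsistent z y)
    (hyx : SignConsistent y x) : SignConsistent z x := by
  refine ⟨fun i => ?_, fun i hi => hzy.2 i (hyx.2 i hi)⟩
  by_cases hy : y i = 0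
  · simp [hzy.2 i hy]
  · have h1 := hyx.1 i
    have h2 := hzy.1 i
    have : 0 ≤ (x i * z i) * (y i * y i) := by nlinarith
    exact nonneg_of_mul_nonneg_left this (mul_self_pos.2 hy)

lemma SignConsistent.support_subset {x y : ι → ℝ} (h : SignConsistent y x) :
    support y ⊆ support x :=
  fun i hy hx => hy (h.2 i hx)

lemma signConsistent_sub_of_abs_le {x y : ι → ℝ} (h : ∀ i, |y i| ≤ |x i|) :
    SignConsistent (x - y) x := by
  refine ⟨fun i => ?_, fun i hx => ?_⟩
  · have : x i * y i ≤ |x i| * |x i| := (le_abs_self _).trans <| by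
      rw [abs_mul]; exact mul_le_mul_of_nonneg_left (h i) (abs_nonneg _)
    simp only [Pi.sub_apply, abs_mul_abs_self] at this ⊢
    nlinarith
  · have := h i
    rw [hx, abs_zero, abs_nonpos_iff] at this
    simp [hx, this]

lemma exists_abs_div_mul_le [Finite ι] (g : ι → ℝ) {h : ι → ℝ} (hh : h ≠ 0) :
    ∃ i₀, h i₀ ≠ 0 ∧ ∀ i, |g i₀ / h i₀ * h i| ≤ |g i| := by
  obtain ⟨i₀, hi₀, hmin⟩ := Set.exists_min_image (support h) (fun i => |g i / h i|)
    (Set.toFinite _) (support_nonempty_iff.2 hh)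
  refine ⟨i₀, hi₀, fun i => ?_⟩
  by_cases hi : h i = 0
  · simp [hi]
  · calc |g i₀ / h i₀ * h i| ≤ |g i / h i| * |h i| := by
          rw [abs_mul]; exact mul_le_mul_of_nonneg_right (hmin i hi) (abs_nonneg _)
      _ = |g i| := by rw [← abs_mul, div_mul_cancel₀ _ hi]

lemma exists_abs_sub_mul_add_abs_eq [Finite ι] {z h : ι → ℝ} (hhz : SignConsistent h z)
    (hh : h ≠ 0) : ∃ t i₀, z i₀ ≠ 0 ∧ z i₀ - t * h i₀ = 0 ∧
      ∀ i, |z i - t * h i| + |t * h i| = |z i| := by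
  obtain ⟨i₀, hi₀, hle⟩ := exists_abs_div_mul_le z hh
  have ht : 0 ≤ z i₀ / h i₀ := div_nonneg_iff.2 (mul_nonneg_iff.1 (hhz.1 i₀))
  refine ⟨z i₀ / h i₀, i₀, fun hz => hi₀ (hhz.2 i₀ hz), by field_simp; ring, fun i => ?_⟩
  refine abs_sub_add_abs_eq_abs ?_ (hle i)
  rw [mul_left_comm]
  exact mul_nonneg ht (hhz.1 i)

lemma mem_coordSubspace_iff {C : Set ι} {x : ι → ℝ} :
    x ∈ coordSubspace C ↔ support x ⊆ C :=
  support_subset_iff'.symm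

lemma IsCircuit.eq_smul {g z : ι → ℝ} (hC : IsCircuit W (support g)) (hg : g ∈ W)
    (hg0 : g ≠ 0) (hz : z ∈ W) (hsupp : support z ⊆ support g) : ∃ c : ℝ, z = c • g := by
  let g' : ↥(W ⊓ coordSubspace (support g)) := ⟨g, hg, mem_coordSubspace_iff.2 subset_rfl⟩
  obtain ⟨c, hc⟩ := (finrank_eq_one_iff_of_nonzero' g' fun h => hg0 congr($h.1)).1 hC.1
    ⟨z, hz, mem_coordSubspace_iff.2 hsupp⟩
  exact ⟨c, congrArg Subtype.val hc.symm⟩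

lemma isCircuit_support_of_minimal {g : ι → ℝ} (hg : g ∈ W) (hg0 : g ≠ 0)
    (hmin : ∀ h ∈ W, h ≠ 0 → ¬ support h ⊂ support g) : IsCircuit W (support g) := by
  obtain ⟨i₀, hi₀⟩ := support_nonempty_iff.2 hg0
  have hgi₀ : g i₀ ≠ 0 := hi₀
  have hspan : W ⊓ coordSubspace (support g) = Submodule.span ℝ {g} := by
    refine le_antisymm
      (fun z ⟨hz, hzC⟩ => Submodule.mem_span_singleton.2 ⟨z i₀ / g i₀, ?_⟩)
      ((Submodule.span_singleton_le_iff_mem _ _).2 ⟨hg, mem_coordSubspace_iff.2 subset_rfl⟩)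
    -- `z - c • g` vanishes at `i₀`, so its support is strictly smaller than that of `g`
    by_contra hne
    refine hmin (z - (z i₀ / g i₀) • g) (W.sub_mem hz (W.smul_mem _ hg))
      (sub_ne_zero.2 (Ne.symm hne))
      ⟨(support_sub _ _).trans (Set.union_subset (mem_coordSubspace_iff.1 hzC)
        (support_const_smul_subset _ _)), fun hsub => hsub hi₀ ?_⟩
    simp only [Pi.sub_apply, Pi.smul_apply, smul_eq_mul]
    field_simp
    ring
  refine ⟨by rw [hspan]; exact finrank_span_singleton hg0, fun C' hC' hrank => ?_⟩
  have hne : W ⊓ coordSubspace C' ≠ ⊥ := fun h => by rw [h] at hrank; simp at hrank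
  obtain ⟨z, ⟨hz, hzC'⟩, hz0⟩ := Submodule.exists_mem_ne_zero_of_ne_bot hne
  exact hmin z hz hz0 (Set.ssubset_of_subset_of_ssubset (mem_coordSubspace_iff.1 hzC') hC')

lemma exists_isCircuit_signConsistent [Finite ι] {g : ι → ℝ} (hg : g ∈ W) (hg0 : g ≠ 0) :
    ∃ h ∈ W, h ≠ 0 ∧ IsCircuit W (support h) ∧ SignConsistent h g := by
  induction hs : support g using WellFoundedLT.induction generalizing g with
  | ind s ih =>
  subst hs
  by_cases hmin : ∀ h ∈ W, h ≠ 0 → ¬ support h ⊂ support g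
  · exact ⟨g, hg, hg0, isCircuit_support_of_minimal hg hg0 hmin, .refl g⟩
  push Not at hmin
  obtain ⟨h, hh, hh0, hsub⟩ := hmin
  obtain ⟨i₀, hi₀, hle⟩ := exists_abs_div_mul_le g hh0
  set g' := g - (g i₀ / h i₀) • h
  have hg'g : SignConsistent g' g := signConsistent_sub_of_abs_le hle
  have hg'i₀ : g' i₀ = 0 := by simp [g', hi₀]
  have hg'0 : g' ≠ 0 := by
    intro h0
    refine hsub.not_subset fun i hi => ?_
    rw [sub_eq_zero.1 h0] at hi
    exact support_const_smul_subset _ _ hi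
  have hg'sub : support g' ⊂ support g :=
    ssubset_of_subset_not_subset hg'g.support_subset fun hsub' =>
      hsub' (hsub.subset hi₀) hg'i₀
  obtain ⟨c, hc, hc0, hcC, hcg'⟩ := ih _ hg'sub (W.sub_mem hg (W.smul_mem _ hh)) hg'0 rfl
  exact ⟨c, hc, hc0, hcC, hcg'.trans hg'g⟩

noncomputable def circuitRatio (g : ι → ℝ) : ℝ :=
  sSup ((fun i => |g i|) '' support g) / sInf ((fun i => |g i|) '' support g)

open scoped Pointwise in
lemma circuitRatio_smul {c : ℝ} (hc : c ≠ 0) (g : ι → ℝ) :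
    circuitRatio (c • g) = circuitRatio g := by
  have himage : (fun i => |(c • g) i|) '' support (c • g) =
      |c| • (fun i => |g i|) '' support g := by
    rw [support_const_smul_of_ne_zero c g hc, ← Set.image_smul, Set.image_image]
    simp [abs_mul]
  rw [circuitRatio, circuitRatio, himage, Real.sSup_smul_of_nonneg (abs_nonneg c),
    Real.sInf_smul_of_nonneg (abs_nonneg c), smul_eq_mul, smul_eq_mul,
    mul_div_mul_left _ _ (abs_ne_zero.2 hc)]

lemma exists_circuitRatio_eq_div [Finite ι] {g : ι → ℝ} (hg0 : g ≠ 0) :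
    ∃ i j, g j ≠ 0 ∧ circuitRatio g = |g i| / |g j| ∧
      ∀ k, |g k| ≤ |g i| ∧ (g k ≠ 0 → |g j| ≤ |g k|) := by
  have hne : ((fun i => |g i|) '' support g).Nonempty := (support_nonempty_iff.2 hg0).image _
  have hfin : ((fun i => |g i|) '' support g).Finite := (Set.toFinite _).image _
  obtain ⟨i, -, hi⟩ := hne.csSup_mem hfin
  obtain ⟨j, hj, hj'⟩ := hne.csInf_mem hfin
  refine ⟨i, j, hj, by rw [circuitRatio, ← hi, ← hj'], fun k => ⟨?_, fun hk => ?_⟩⟩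
  · by_cases hk : g k = 0
    · simp [hk]
    · exact (le_csSup hfin.bddAbove ⟨k, hk, rfl⟩).trans_eq hi.symm
  · exact hj'.trans_le (csInf_le hfin.bddBelow ⟨k, hk, rfl⟩)

lemma one_le_circuitRatio [Finite ι] {g : ι → ℝ} (hg0 : g ≠ 0) : 1 ≤ circuitRatio g := by
  obtain ⟨i, j, hj, hr, hij⟩ := exists_circuitRatio_eq_div hg0
  rw [hr, one_le_div (abs_pos.2 hj)]
  exact (hij j).1

lemma abs_le_circuitRatio_mul_abs [Finite ι] {g : ι → ℝ} {i : ι} (hi : g i ≠ 0) (k : ι) :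
    |g k| ≤ circuitRatio g * |g i| := by
  have hg0 : g ≠ 0 := ne_of_apply_ne (· i) hi
  obtain ⟨i', j, hj, hr, hij⟩ := exists_circuitRatio_eq_div hg0
  calc |g k| ≤ |g i'| := (hij k).1
    _ = circuitRatio g * |g j| := by rw [hr, div_mul_cancel₀ _ (abs_ne_zero.2 hj)]
    _ ≤ circuitRatio g * |g i| := mul_le_mul_of_nonneg_left ((hij i).2 hi)
      (zero_le_one.trans (one_le_circuitRatio hg0))

lemma exists_ne_circuitRatio_mul_abs_le [Finite ι] {g : ι → ℝ}
    (h2 : 2 ≤ (support g).ncard) : ∃ i j, i ≠ j ∧ g j ≠ 0 ∧ circuitRatio g * |g j| ≤ |g i| := by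
  have hg0 : g ≠ 0 := by rintro rfl; simp at h2
  obtain ⟨i, j, hj, hr, hij⟩ := exists_circuitRatio_eq_div hg0
  have hrj : circuitRatio g * |g j| = |g i| := by
    rw [hr, div_mul_cancel₀ _ (abs_ne_zero.2 hj)]
  by_cases hij' : i = j
  · -- all entries on the support then have the same absolute value
    obtain ⟨k, hk, hkj⟩ := Set.exists_ne_of_one_lt_ncard h2 j
    exact ⟨k, j, hkj, hj, hrj ▸ hij' ▸ (hij k).2 hk⟩
  · exact ⟨i, j, hij', hj, hrj.le⟩

lemma kappa_eq_sSup (W : Submodule ℝ (ι → ℝ)) :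
    kappa W = sSup ({1} ∪ circuitRatio '' {g | g ∈ W ∧ g ≠ 0 ∧ IsCircuit W (support g)}) := by
  rw [kappa]
  congr 2
  ext r
  constructor
  · rintro ⟨_, hC, g, hg, hg0, rfl, rfl⟩
    exact ⟨g, ⟨hg, hg0, hC⟩, rfl⟩
  · rintro ⟨g, ⟨hg, hg0, hC⟩, rfl⟩
    exact ⟨_, hC, g, hg, hg0, rfl, rfl⟩

lemma finite_circuitRatio_image [Finite ι] (W : Submodule ℝ (ι → ℝ)) :
    (circuitRatio '' {g | g ∈ W ∧ g ≠ 0 ∧ IsCircuit W (support g)}).Finite := by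
  refine (Set.finite_iUnion fun C : Set ι => Set.Subsingleton.finite (s := circuitRatio ''
    {g | (g ∈ W ∧ g ≠ 0 ∧ IsCircuit W (support g)) ∧ support g = C}) ?_).subset ?_
  · rintro _ ⟨g, ⟨⟨hg, hg0, hC⟩, rfl⟩, rfl⟩ _ ⟨g', ⟨⟨hg', hg'0, -⟩, hsupp⟩, rfl⟩
    obtain ⟨c, rfl⟩ := hC.eq_smul hg hg0 hg' hsupp.subset
    exact (circuitRatio_smul (left_ne_zero_of_smul hg'0) g).symm
  · rintro _ ⟨g, hg, rfl⟩
    exact Set.mem_iUnion.2 ⟨support g, g, ⟨hg, rfl⟩, rfl⟩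

lemma one_le_kappa [Finite ι] (W : Submodule ℝ (ι → ℝ)) : 1 ≤ kappa W := by
  rw [kappa_eq_sSup]
  exact le_csSup ((finite_circuitRatio_image W).insert 1).bddAbove (Or.inl rfl)

lemma circuitRatio_le_kappa [Finite ι] {g : ι → ℝ} (hg : g ∈ W) (hg0 : g ≠ 0)
    (hC : IsCircuit W (support g)) : circuitRatio g ≤ kappa W := by
  rw [kappa_eq_sSup]
  exact le_csSup ((finite_circuitRatio_image W).insert 1).bddAbove
    (Or.inr ⟨g, ⟨hg, hg0, hC⟩, rfl⟩)

lemma kappa_le {b : ℝ} (h1 : 1 ≤ b)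
    (h : ∀ g ∈ W, g ≠ 0 → IsCircuit W (support g) → circuitRatio g ≤ b) : kappa W ≤ b := by
  rw [kappa_eq_sSup]
  refine csSup_le ⟨1, Or.inl rfl⟩ ?_
  rintro _ (rfl | ⟨g, ⟨hg, hg0, hC⟩, rfl⟩)
  exacts [h1, h g hg hg0 hC]

lemma abs_le_kappa_mul_abs [Finite ι] {g : ι → ℝ} (hg : g ∈ W) (hg0 : g ≠ 0)
    (hC : IsCircuit W (support g)) {i : ι} (hi : g i ≠ 0) (k : ι) : |g k| ≤ kappa W * |g i| :=
  (abs_le_circuitRatio_mul_abs hi k).trans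
    (mul_le_mul_of_nonneg_right (circuitRatio_le_kappa hg hg0 hC) (abs_nonneg _))

lemma abs_le_kappa_mul_sum_of_forall_circuit_meets [Finite ι] {I : Finset ι} {z : ι → ℝ}
    (hz : z ∈ W) (hmeet : ∀ h ∈ W, h ≠ 0 → IsCircuit W (support h) → SignConsistent h z →
      ∃ i ∈ I, h i ≠ 0) (k : ι) : |z k| ≤ kappa W * ∑ i ∈ I, |z i| := by
  induction hs : support z using WellFoundedLT.induction generalizing z with
  | ind s ih =>
  subst hs
  have hκ : 0 ≤ kappa W := zero_le_one.trans (one_le_kappa W)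
  by_cases hz0 : z = 0
  · simp [hz0]
  -- peel off a multiple of a conformal circuit, which meets `I`, and induct on the rest
  obtain ⟨h, hh, hh0, hC, hhz⟩ := exists_isCircuit_signConsistent hz hz0
  obtain ⟨i₁, hi₁, hhi₁⟩ := hmeet h hh hh0 hC hhz
  obtain ⟨t, i₀, hzi₀, hz'i₀, hadd⟩ := exists_abs_sub_mul_add_abs_eq hhz hh0
  set z' := z - t • h
  have hz'z : SignConsistent z' z := signConsistent_sub_of_abs_le fun i => by
    simpa using (le_add_of_nonneg_left (abs_nonneg _)).trans (hadd i).le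
  have hz'sub : support z' ⊂ support z :=
    ssubset_of_subset_not_subset hz'z.support_subset fun hsub =>
      hsub hzi₀ (by simpa [z'] using hz'i₀)
  have hz' := ih _ hz'sub (W.sub_mem hz (W.smul_mem t hh))
    (fun c hc hc0 hcC hcz' => hmeet c hc hc0 hcC (hcz'.trans hz'z)) rfl
  have hpeel : |t * h k| ≤ kappa W * ∑ i ∈ I, |t * h i| :=
    calc |t * h k| = |t| * |h k| := abs_mul _ _
      _ ≤ |t| * (kappa W * |h i₁|) :=
        mul_le_mul_of_nonneg_left (abs_le_kappa_mul_abs hh hh0 hC hhi₁ k) (abs_nonneg _)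
      _ = kappa W * |t * h i₁| := by rw [abs_mul]; ring
      _ ≤ kappa W * ∑ i ∈ I, |t * h i| := mul_le_mul_of_nonneg_left
        (Finset.single_le_sum (f := fun i => |t * h i|) (fun _ _ => abs_nonneg _) hi₁) hκ
  calc |z k| = |z' k| + |t * h k| := by simpa [z'] using (hadd k).symm
    _ ≤ kappa W * ∑ i ∈ I, |z' i| + kappa W * ∑ i ∈ I, |t * h i| := add_le_add hz' hpeel
    _ = kappa W * ∑ i ∈ I, |z i| := by
      rw [← mul_add, ← Finset.sum_add_distrib]
      simp only [z', Pi.sub_apply, Pi.smul_apply, smul_eq_mul, hadd]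

end Circuits

section Lifts

omit [DecidableEq ι]

variable {W : Submodule ℝ (ι → ℝ)} {I : Finset ι} {g : ι → ℝ}

lemma norm2_lt_norm2 {a b : ι → ℝ} (hle : ∀ i, |a i| ≤ |b i|) {j : ι}
    (hlt : |a j| < |b j|) : norm2 a < norm2 b :=
  Real.sqrt_lt_sqrt (Finset.sum_nonneg fun _ _ => sq_nonneg _)
    (Finset.sum_lt_sum (fun i _ => sq_le_sq.2 (hle i)) ⟨j, Finset.mem_univ j, sq_lt_sq.2 hlt⟩)

lemma norm2_le_sqrt_card_mul {z : ι → ℝ} {B : ℝ} (h : ∀ i, |z i| ≤ B) :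
    norm2 z ≤ √(Fintype.card ι) * B := by
  rcases isEmpty_or_nonempty ι with hι | ⟨⟨i⟩⟩
  · simp [norm2]
  have hB : 0 ≤ B := (abs_nonneg _).trans (h i)
  calc norm2 z ≤ √(Fintype.card ι * B ^ 2) := Real.sqrt_le_sqrt <| by
        simpa using Finset.sum_le_card_nsmul Finset.univ (z · ^ 2) (B ^ 2)
          fun i _ => sq_le_sq' (neg_le_of_abs_le (h i)) (le_of_abs_le (h i))
    _ = √(Fintype.card ι) * B := by rw [Real.sqrt_mul (Nat.cast_nonneg _), Real.sqrt_sq hB]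

lemma sq_add_sq_le_norm2_sq (x : ι → ℝ) {i j : ι} (hij : i ≠ j) :
    x i ^ 2 + x j ^ 2 ≤ norm2 x ^ 2 := by
  classical
  rw [norm2, Real.sq_sqrt (Finset.sum_nonneg fun _ _ => sq_nonneg _),
    ← Finset.sum_pair hij (f := (x · ^ 2))]
  exact Finset.sum_le_sum_of_subset_of_nonneg (Finset.subset_univ _) fun _ _ _ => sq_nonneg _

lemma IsMinLift.exists_mem_ne_zero {p z h : ι → ℝ} (hz : IsMinLift W I p z) (hh : h ∈ W)
    (hh0 : h ≠ 0) (hhz : SignConsistent h z) : ∃ i ∈ I, h i ≠ 0 := by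
  by_contra! hI
  -- otherwise peeling `h` off `z` gives a shorter lift
  obtain ⟨t, i₀, hzi₀, hz'i₀, hadd⟩ := exists_abs_sub_mul_add_abs_eq hhz hh0
  have hlt : norm2 (z - t • h) < norm2 z :=
    norm2_lt_norm2 (j := i₀) (fun i => by
        simpa using (le_add_of_nonneg_right (abs_nonneg _)).trans (hadd i).le)
      (by simpa [hz'i₀] using hzi₀)
  exact hlt.not_ge <| hz.2.2 _ (W.sub_mem hz.1 (W.smul_mem t hh)) fun i hi => by
    simp [hI i hi, hz.2.1 i hi]

lemma IsMinLift.abs_le_kappa_mul_sum {p z : ι → ℝ} (hz : IsMinLift W I p z) (k : ι) :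
    |z k| ≤ kappa W * ∑ i ∈ I, |p i| :=
  calc |z k| ≤ kappa W * ∑ i ∈ I, |z i| := abs_le_kappa_mul_sum_of_forall_circuit_meets hz.1
        (fun _ hh hh0 _ hhz => hz.exists_mem_ne_zero hh hh0 hhz) k
    _ = kappa W * ∑ i ∈ I, |p i| := by
        congr 1
        exact Finset.sum_congr rfl fun i hi => by rw [hz.2.1 i hi]

lemma IsMinLift.norm2_div_le {p z : ι → ℝ} (hz : IsMinLift W I p z) :
    norm2 z / √(∑ i ∈ I, p i ^ 2) ≤ Fintype.card ι * kappa W := by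
  have hκ : 0 ≤ kappa W := zero_le_one.trans (one_le_kappa W)
  have hcard : √(I.card : ℝ) ≤ √(Fintype.card ι) :=
    Real.sqrt_le_sqrt (by exact_mod_cast I.card_le_univ)
  refine div_le_of_le_mul₀ (Real.sqrt_nonneg _) (by positivity) ?_
  calc norm2 z ≤ √(Fintype.card ι) * (kappa W * ∑ i ∈ I, |p i|) :=
        norm2_le_sqrt_card_mul hz.abs_le_kappa_mul_sum
    _ ≤ √(Fintype.card ι) * (kappa W * (√(Fintype.card ι) * √(∑ i ∈ I, p i ^ 2))) := by
        gcongr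
        exact (I.sum_abs_le_sqrt_card_mul_sqrt_sum_sq p).trans
          (mul_le_mul_of_nonneg_right hcard (Real.sqrt_nonneg _))
    _ = Fintype.card ι * kappa W * √(∑ i ∈ I, p i ^ 2) := by
        linear_combination (kappa W * √(∑ i ∈ I, p i ^ 2)) *
          Real.mul_self_sqrt (Nat.cast_nonneg (α := ℝ) (Fintype.card ι))

lemma liftOpNorm_le_card_mul_kappa (W : Submodule ℝ (ι → ℝ)) (I : Finset ι) :
    liftOpNorm W I ≤ Fintype.card ι * kappa W :=
  Real.sSup_le (by rintro _ ⟨p, z, hz, rfl⟩; exact hz.norm2_div_le)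
    (by have := one_le_kappa W; positivity)

lemma chiBar_le_card_mul_kappa (W : Submodule ℝ (ι → ℝ)) :
    chiBar W ≤ Fintype.card ι * kappa W :=
  Real.sSup_le (by rintro _ ⟨I, -, rfl⟩; exact liftOpNorm_le_card_mul_kappa W I)
    (by have := one_le_kappa W; positivity)

lemma IsMinLift.norm2_div_le_liftOpNorm {p z : ι → ℝ} (hz : IsMinLift W I p z) :
    norm2 z / √(∑ i ∈ I, p i ^ 2) ≤ liftOpNorm W I :=
  le_csSup ⟨_, by rintro _ ⟨p, z, hz, rfl⟩; exact hz.norm2_div_le⟩ ⟨p, z, hz, rfl⟩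

lemma liftOpNorm_le_chiBar (hI : I.Nonempty) : liftOpNorm W I ≤ chiBar W :=
  le_csSup ⟨_, by rintro _ ⟨I, -, rfl⟩; exact liftOpNorm_le_card_mul_kappa W I⟩
    ⟨I, hI, rfl⟩

lemma IsCircuit.isMinLift_self [DecidableEq ι] (hC : IsCircuit W (support g)) (hg : g ∈ W)
    (hg0 : g ≠ 0) {j : ι} (hj : g j ≠ 0) :
    IsMinLift W (insert j (Finset.univ.filter (g · = 0))) g g := by
  refine ⟨hg, fun _ _ => rfl, fun z hz hzg => le_of_eq ?_⟩
  obtain ⟨c, rfl⟩ := hC.eq_smul hg hg0 hz fun i hzi hgi =>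
    hzi ((hzg i (Finset.mem_insert_of_mem (by simpa using hgi))).trans hgi)
  have hc : c = 1 := by simpa [hj] using hzg j (Finset.mem_insert_self _ _)
  rw [hc, one_smul]

lemma IsCircuit.sq_add_sq_le_chiBar_sq_mul_sq (hC : IsCircuit W (support g)) (hg : g ∈ W)
    (hg0 : g ≠ 0) {i j : ι} (hij : i ≠ j) (hj : g j ≠ 0) :
    g i ^ 2 + g j ^ 2 ≤ chiBar W ^ 2 * g j ^ 2 := by
  classical
  have hsum : ∑ k ∈ insert j (Finset.univ.filter (g · = 0)), g k ^ 2 = g j ^ 2 :=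
    Finset.sum_eq_single_of_mem j (Finset.mem_insert_self _ _) fun k hk hkj => by
      simp [(Finset.mem_filter.1 ((Finset.mem_insert.1 hk).resolve_left hkj)).2]
  have hle := (hC.isMinLift_self hg hg0 hj).norm2_div_le_liftOpNorm.trans
    (liftOpNorm_le_chiBar ⟨j, Finset.mem_insert_self _ _⟩)
  rw [hsum, Real.sqrt_sq_eq_abs, div_le_iff₀ (abs_pos.2 hj)] at hle
  calc g i ^ 2 + g j ^ 2 ≤ norm2 g ^ 2 := sq_add_sq_le_norm2_sq g hij
    _ ≤ (chiBar W * |g j|) ^ 2 := pow_le_pow_left₀ (Real.sqrt_nonneg _) hle 2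
    _ = chiBar W ^ 2 * g j ^ 2 := by rw [mul_pow, sq_abs]

lemma IsCircuit.circuitRatio_sq_add_one_le_chiBar_sq (hC : IsCircuit W (support g))
    (hg : g ∈ W) (hg0 : g ≠ 0) (h2 : 2 ≤ (support g).ncard) :
    circuitRatio g ^ 2 + 1 ≤ chiBar W ^ 2 := by
  obtain ⟨i, j, hij, hj, hle⟩ := exists_ne_circuitRatio_mul_abs_le h2
  have hr : 0 ≤ circuitRatio g := zero_le_one.trans (one_le_circuitRatio hg0)
  have hsq : (circuitRatio g ^ 2 + 1) * g j ^ 2 ≤ chiBar W ^ 2 * g j ^ 2 := by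
    have := pow_le_pow_left₀ (by positivity) hle 2
    rw [mul_pow, sq_abs, sq_abs] at this
    linarith [hC.sq_add_sq_le_chiBar_sq_mul_sq hg hg0 hij hj]
  exact le_of_mul_le_mul_right hsq (by positivity)

end Lifts

/-- for `W ≠ {0}` without loops, `(1/n)·χ̄_W ≤ κ_W ≤ √(χ̄_W² − 1)`. -/
theorem kappa_chiBar_bounds {n : ℕ} (W : Submodule ℝ (Fin n → ℝ)) (hW : W ≠ ⊥)
    (hnoloop : ∀ C : Set (Fin n), IsCircuit W C → 2 ≤ C.ncard) :
    (1 / (n : ℝ)) * chiBar W ≤ kappa W ∧ kappa W ≤ Real.sqrt (chiBar W ^ 2 - 1) := by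
  have hκ := one_le_kappa W
  have hratio : ∀ g ∈ W, g ≠ 0 → IsCircuit W (support g) →
      circuitRatio g ^ 2 + 1 ≤ chiBar W ^ 2 :=
    fun g hg hg0 hC => hC.circuitRatio_sq_add_one_le_chiBar_sq hg hg0 (hnoloop _ hC)
  constructor
  · have hχ : chiBar W ≤ n * kappa W := by simpa using chiBar_le_card_mul_kappa W
    rcases n.eq_zero_or_pos with rfl | hn
    · simpa using zero_le_one.trans hκ
    · rw [one_div_mul_eq_div, div_le_iff₀ (Nat.cast_pos.2 hn)]
      linarith
  · obtain ⟨g, hg, hg0⟩ := W.ne_bot_iff.1 hW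
    obtain ⟨h, hh, hh0, hC, -⟩ := exists_isCircuit_signConsistent hg hg0
    refine kappa_le ?_ fun g hg hg0 hC => ?_
    · rw [Real.le_sqrt' one_pos]
      nlinarith [hratio h hh hh0 hC, one_le_circuitRatio hh0]
    · rw [Real.le_sqrt' (zero_lt_one.trans_le (one_le_circuitRatio hg0))]
      linarith [hratio g hg hg0 hC]
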